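/- arXiv:2102.06458 — 3 statements merged into one kernel-verified Lean document; each statement's English description precedes it below -/
import Mathlib

section
/- If q : (0,1) → ℝ is square-integrable and nondecreasing, then for every nonnegative function T : [0,1] → ℝ in H¹(0,1) with T(0) = T(1) = 0, one has -∫₀¹ q(z) T'(z) dz ≥ 0. -/
open MeasureTheory intervalIntegral Set Filter

lemma aux_sq_int {f : ℝ → ℝ} (hm : AEStronglyMeasurable f (volume.restrict (Ioo (0:ℝ) 1)))
    (hsq : IntegrableOn (fun z => f z ^ 2) (Ioo (0:ℝ) 1)) : IntegrableOn f (Ioo (0:ℝ) 1) := by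
  have hg : IntegrableOn (fun z => (1 + f z ^ 2) / 2) (Ioo (0:ℝ) 1) := by
    refine Integrable.div_const (Integrable.add ?_ hsq) 2
    exact integrableOn_const (by simp [Real.volume_Ioo])
  refine hg.mono' hm (Filter.Eventually.of_forall fun z => ?_)
  rw [Real.norm_eq_abs]
  nlinarith [sq_nonneg (|f z| - 1), sq_abs (f z), abs_nonneg (f z)]

lemma aux_II {f : ℝ → ℝ} (hf : IntegrableOn f (Ioo (0:ℝ) 1)) {a b : ℝ}
    (h0 : 0 ≤ a) (hab : a ≤ b) (hb1 : b ≤ 1) : IntervalIntegrable f volume a b := by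
  rw [intervalIntegrable_iff, uIoc_of_le hab]
  rw [integrableOn_Ioc_iff_integrableOn_Ioo]
  exact hf.mono_set (Ioo_subset_Ioo h0 hb1)

lemma aux_abel (u v : ℕ → ℝ) (n : ℕ) (hn : 1 ≤ n)
    (hu : ∀ i j, i ≤ j → j ≤ n - 1 → u i ≤ u j)
    (hv : ∀ i, i ≤ n → 0 ≤ v i) :
    ∑ i ∈ Finset.range n, u i * (v (i+1) - v i) ≤ u (n-1) * v n - u 0 * v 0 := by
  induction n with
  | zero => omega
  | succ m ih =>
    rcases Nat.eq_or_lt_of_le hn with h1 | h1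
    · simp [← h1]
      ring_nf
      simp
    · have hm : 1 ≤ m := by omega
      have hmm : m + 1 - 1 = m := by omega
      rw [Finset.sum_range_succ, hmm]
      have ih' := ih hm (fun i j hij hj => hu i j hij (by omega)) (fun i hi => hv i (by omega))
      have h2 : u (m-1) ≤ u m := hu (m-1) m (by omega) (by omega)
      have h3 : 0 ≤ v m := hv m (by omega)
      nlinarith [mul_le_mul_of_nonneg_right h2 h3]

lemma aux_cs {f : ℝ → ℝ} {a b : ℝ} (hab : a ≤ b)
    (hfa : IntervalIntegrable (fun z => |f z|) volume a b)
    (hsq : IntervalIntegrable (fun z => f z ^ 2) volume a b) :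
    ∫ z in a..b, |f z| ≤ Real.sqrt (b - a) * Real.sqrt (∫ z in a..b, f z ^ 2) := by
  set Y := ∫ z in a..b, f z ^ 2 with hYdef
  have hY0 : 0 ≤ Y := intervalIntegral.integral_nonneg hab (fun z _ => sq_nonneg _)
  rcases eq_or_lt_of_le hab with rfl | hab'
  · simp
  rcases eq_or_lt_of_le hY0 with hY | hY
  · -- Y = 0 : f = 0 a.e.
    have h0 : ∫ z in a..b, |f z| = 0 := by
      rw [intervalIntegral.integral_of_le hab] at hYdef ⊢
      have hint : IntegrableOn (fun z => f z ^ 2) (Ioc a b) := by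
        rw [← uIoc_of_le hab, ← intervalIntegrable_iff] ; exact hsq
      have hz0 : ∫ z in Ioc a b, f z ^ 2 = 0 := by rw [← hYdef]; exact hY.symm
      have := (integral_eq_zero_iff_of_nonneg_ae
        (Filter.Eventually.of_forall (fun z => sq_nonneg (f z))) hint).1 hz0
      refine integral_eq_zero_of_ae ?_
      filter_upwards [this] with z hz
      have : f z ^ 2 = 0 := hz
      have : f z = 0 := by nlinarith
      simp [this]
    rw [h0, ← hY]
    positivity
  · set lam := Real.sqrt Y / Real.sqrt (b - a) with hlam
    have hs0 : 0 < Real.sqrt (b - a) := Real.sqrt_pos.2 (by linarith)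
    have hy0 : 0 < Real.sqrt Y := Real.sqrt_pos.2 hY
    have hl0 : 0 < lam := div_pos hy0 hs0
    have hpt : ∀ z, |f z| ≤ lam / 2 + f z ^ 2 / (2 * lam) := by
      intro z
      rw [div_add_div _ _ (by norm_num) (by positivity), le_div_iff₀ (by positivity)]
      nlinarith [sq_nonneg (lam - |f z|), sq_abs (f z)]
    have hmono : ∫ z in a..b, |f z| ≤ ∫ z in a..b, (lam / 2 + f z ^ 2 / (2 * lam)) := by
      refine intervalIntegral.integral_mono_on hab hfa ?_ (fun z _ => hpt z)
      exact (_root_.intervalIntegrable_const).add (hsq.div_const _)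
    have hcomp : ∫ z in a..b, (lam / 2 + f z ^ 2 / (2 * lam))
        = (b - a) * (lam / 2) + Y / (2 * lam) := by
      rw [intervalIntegral.integral_add _root_.intervalIntegrable_const (hsq.div_const _),
        intervalIntegral.integral_const, intervalIntegral.integral_div]
      simp [smul_eq_mul, hYdef]
    have hsq1 : Real.sqrt (b - a) ^ 2 = b - a := Real.sq_sqrt (by linarith)
    have hsq2 : Real.sqrt Y ^ 2 = Y := Real.sq_sqrt hY0
    have : (b - a) * (lam / 2) + Y / (2 * lam) = Real.sqrt (b - a) * Real.sqrt Y := by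
      rw [hlam]
      field_simp
      nlinarith [hsq1, hsq2]
    linarith [hmono, hcomp ▸ hmono, this ▸ (hcomp ▸ hmono)]

lemma aux_tail {f : ℝ → ℝ} (hf : IntegrableOn f (Ioo (0:ℝ) 1)) (hf0 : ∀ z, 0 ≤ f z)
    (s : ℕ → Set ℝ) (hs : ∀ k, MeasurableSet (s k)) (hsub : ∀ k, s k ⊆ Ioo 0 1)
    (hlim : ∀ z ∈ Ioo (0:ℝ) 1, ∀ᶠ k in atTop, z ∉ s k) :
    Tendsto (fun k => ∫ z in s k, f z) atTop (nhds 0) := by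
  have heq : ∀ k, ∫ z in s k, f z = ∫ z in Ioo (0:ℝ) 1, (s k).indicator f z := by
    intro k
    rw [setIntegral_indicator (hs k), inter_eq_self_of_subset_right (hsub k)]
  simp_rw [heq]
  have key : Tendsto (fun k => ∫ z in Ioo (0:ℝ) 1, (s k).indicator f z) atTop
      (nhds (∫ z in Ioo (0:ℝ) 1, (0:ℝ))) := by
    refine tendsto_integral_of_dominated_convergence f
      (fun k => hf.aestronglyMeasurable.indicator (hs k)) hf ?_ ?_
    · intro k
      refine Filter.Eventually.of_forall fun z => ?_
      rw [Real.norm_eq_abs]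
      by_cases hz : z ∈ s k
      · rw [indicator_of_mem hz, abs_of_nonneg (hf0 z)]
      · rw [indicator_of_notMem hz]; simpa using hf0 z
    · filter_upwards [ae_restrict_mem measurableSet_Ioo] with z hz
      have := hlim z hz
      refine Tendsto.congr' ?_ tendsto_const_nhds
      filter_upwards [this] with k hk
      exact (indicator_of_notMem hk f).symm
  simpa using key

lemma aux_middle (q T T' : ℝ → ℝ)
    (hq_mono : MonotoneOn q (Ioo (0:ℝ) 1))
    (hqT' : IntegrableOn (fun z => q z * T' z) (Ioo (0:ℝ) 1))
    (habs : IntegrableOn (fun z => |T' z|) (Ioo (0:ℝ) 1))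
    (hT'sq : IntegrableOn (fun z => T' z ^ 2) (Ioo (0:ℝ) 1))
    (hT'int : IntegrableOn T' (Ioo (0:ℝ) 1))
    (hftc : ∀ a b : ℝ, 0 ≤ a → a ≤ b → b ≤ 1 → ∫ z in a..b, T' z = T b - T a)
    (hT_nonneg : ∀ z ∈ Icc (0:ℝ) 1, 0 ≤ T z)
    {δ : ℝ} (hδ0 : 0 < δ) (hδ : δ < 1/2) :
    ∫ x in δ..(1-δ), q x * T' x ≤ max (q (1-δ)) 0 * T (1-δ) + max (-q δ) 0 * T δ := by
  set Ytot := ∫ z in Ioo (0:ℝ) 1, T' z ^ 2 with hYtotdef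
  have hYtot0 : 0 ≤ Ytot := setIntegral_nonneg measurableSet_Ioo (fun z _ => sq_nonneg _)
  have hδ1 : δ < 1 - δ := by linarith
  have hδmem : δ ∈ Ioo (0:ℝ) 1 := ⟨hδ0, by linarith⟩
  have hδ'mem : (1-δ) ∈ Ioo (0:ℝ) 1 := ⟨by linarith, by linarith⟩
  have key : ∀ n : ℕ, 1 ≤ n → ∫ x in δ..(1-δ), q x * T' x ≤
      max (q (1-δ)) 0 * T (1-δ) + max (-q δ) 0 * T δ
        + (q (1-δ) - q δ) * (Real.sqrt ((1-2*δ)/n) * Real.sqrt Ytot) := by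
    intro n hn
    have hn0 : (0:ℝ) < n := by exact_mod_cast hn
    set h := (1-2*δ)/n with hhdef
    have hh0 : 0 < h := div_pos (by linarith) hn0
    set z : ℕ → ℝ := fun i => δ + i * h with hzdef
    have hz0 : z 0 = δ := by simp [hzdef]
    have hzn : z n = 1 - δ := by
      simp only [hzdef, hhdef]
      field_simp
      ring
    have hmono_z : ∀ i j : ℕ, i ≤ j → z i ≤ z j := by
      intro i j hij
      simp only [hzdef]
      have : (i:ℝ) ≤ j := by exact_mod_cast hij
      nlinarith
    have hmem : ∀ i : ℕ, i ≤ n → z i ∈ Icc δ (1-δ) := by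
      intro i hi
      constructor
      · simp only [hzdef]
        have : 0 ≤ (i:ℝ) * h := mul_nonneg (Nat.cast_nonneg i) hh0.le
        linarith
      · rw [← hzn]; exact hmono_z i n hi
    have hmemIoo : ∀ i : ℕ, i ≤ n → z i ∈ Ioo (0:ℝ) 1 := by
      intro i hi
      obtain ⟨h1, h2⟩ := hmem i hi
      exact ⟨lt_of_lt_of_le hδ0 h1, by linarith⟩
    have hlen : ∀ i : ℕ, z (i+1) - z i = h := by
      intro i; simp only [hzdef]; push_cast; ring
    have Ii : ∀ i < n, IntervalIntegrable (fun x => q x * T' x) volume (z i) (z (i+1)) := by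
      intro i hi
      exact aux_II hqT' (le_of_lt (hmemIoo i hi.le).1) (hmono_z i (i+1) (by omega))
        (le_of_lt (hmemIoo (i+1) hi).2)
    have hsum : ∑ i ∈ Finset.range n, ∫ x in (z i)..(z (i+1)), q x * T' x
        = ∫ x in (z 0)..(z n), q x * T' x :=
      intervalIntegral.sum_integral_adjacent_intervals Ii
    set C := Real.sqrt h * Real.sqrt Ytot with hCdef
    have hC0 : 0 ≤ C := by positivity
    have hpiece : ∀ i < n, ∫ x in (z i)..(z (i+1)), q x * T' x ≤
        q (z i) * (T (z (i+1)) - T (z i)) + (q (z (i+1)) - q (z i)) * C := by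
      intro i hi
      have h0i : 0 ≤ z i := le_of_lt (hmemIoo i hi.le).1
      have hii : z i ≤ z (i+1) := hmono_z i (i+1) (by omega)
      have h1i : z (i+1) ≤ 1 := le_of_lt (hmemIoo (i+1) hi).2
      have hTi : IntervalIntegrable T' volume (z i) (z (i+1)) := aux_II hT'int h0i hii h1i
      have habsI : IntervalIntegrable (fun x => |T' x|) volume (z i) (z (i+1)) :=
        aux_II habs h0i hii h1i
      have hsqI : IntervalIntegrable (fun x => T' x ^ 2) volume (z i) (z (i+1)) :=
        aux_II hT'sq h0i hii h1i
      have e1 : ∫ x in (z i)..(z (i+1)), q (z i) * T' x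
          = q (z i) * (T (z (i+1)) - T (z i)) := by
        rw [intervalIntegral.integral_const_mul, hftc _ _ h0i hii h1i]
      have int1 : IntervalIntegrable (fun x => (q x - q (z i)) * T' x) volume (z i) (z (i+1)) := by
        have := (Ii i hi).sub (hTi.const_mul (q (z i)))
        apply this.congr
        intro x _; dsimp only
        ring
      have stepA : ∫ x in (z i)..(z (i+1)), q x * T' x
          = (∫ x in (z i)..(z (i+1)), (q x - q (z i)) * T' x)
            + q (z i) * (T (z (i+1)) - T (z i)) := by
        rw [← e1, ← intervalIntegral.integral_add int1 (hTi.const_mul (q (z i)))]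
        congr 1
        funext x
        ring
      have stepB : ∫ x in (z i)..(z (i+1)), (q x - q (z i)) * T' x
          ≤ ∫ x in (z i)..(z (i+1)), (q (z (i+1)) - q (z i)) * |T' x| := by
        refine intervalIntegral.integral_mono_on hii int1 (habsI.const_mul _) (fun x hx => ?_)
        have hxIoo : x ∈ Ioo (0:ℝ) 1 :=
          ⟨lt_of_lt_of_le (hmemIoo i hi.le).1 hx.1, lt_of_le_of_lt hx.2 (hmemIoo (i+1) hi).2⟩
        have h1 : 0 ≤ q x - q (z i) :=
          sub_nonneg.2 (hq_mono (hmemIoo i hi.le) hxIoo hx.1)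
        have h2 : q x - q (z i) ≤ q (z (i+1)) - q (z i) :=
          sub_le_sub_right (hq_mono hxIoo (hmemIoo (i+1) hi) hx.2) _
        calc (q x - q (z i)) * T' x ≤ (q x - q (z i)) * |T' x| :=
              mul_le_mul_of_nonneg_left (le_abs_self _) h1
          _ ≤ (q (z (i+1)) - q (z i)) * |T' x| :=
              mul_le_mul_of_nonneg_right h2 (abs_nonneg _)
      have hΔq : 0 ≤ q (z (i+1)) - q (z i) :=
        sub_nonneg.2 (hq_mono (hmemIoo i hi.le) (hmemIoo (i+1) hi) hii)
      have stepC : ∫ x in (z i)..(z (i+1)), |T' x| ≤ C := by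
        have hcs := aux_cs hii habsI hsqI
        have hsub : ∫ x in (z i)..(z (i+1)), T' x ^ 2 ≤ Ytot := by
          rw [intervalIntegral.integral_of_le hii, integral_Ioc_eq_integral_Ioo]
          refine setIntegral_mono_set hT'sq
            (Filter.Eventually.of_forall (fun x => sq_nonneg _)) ?_
          exact HasSubset.Subset.eventuallyLE
            (Ioo_subset_Ioo (le_of_lt (hmemIoo i hi.le).1) (le_of_lt (hmemIoo (i+1) hi).2))
        calc ∫ x in (z i)..(z (i+1)), |T' x|
            ≤ Real.sqrt (z (i+1) - z i) * Real.sqrt (∫ x in (z i)..(z (i+1)), T' x ^ 2) := hcs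
          _ ≤ Real.sqrt h * Real.sqrt Ytot := by
              rw [hlen i]
              exact mul_le_mul_of_nonneg_left (Real.sqrt_le_sqrt hsub) (Real.sqrt_nonneg _)
      have stepC' : ∫ x in (z i)..(z (i+1)), (q (z (i+1)) - q (z i)) * |T' x|
          ≤ (q (z (i+1)) - q (z i)) * C := by
        rw [intervalIntegral.integral_const_mul]
        exact mul_le_mul_of_nonneg_left stepC hΔq
      linarith [stepA, stepB, stepC']
    have hsum_le : ∫ x in δ..(1-δ), q x * T' x ≤
        (∑ i ∈ Finset.range n, q (z i) * (T (z (i+1)) - T (z i)))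
        + (∑ i ∈ Finset.range n, (q (z (i+1)) - q (z i))) * C := by
      rw [hz0, hzn] at hsum
      rw [← hsum, Finset.sum_mul, ← Finset.sum_add_distrib]
      exact Finset.sum_le_sum (fun i hi => hpiece i (Finset.mem_range.1 hi))
    have htel : ∑ i ∈ Finset.range n, (q (z (i+1)) - q (z i)) = q (z n) - q (z 0) :=
      Finset.sum_range_sub (fun i => q (z i)) n
    have habel : ∑ i ∈ Finset.range n, q (z i) * (T (z (i+1)) - T (z i))
        ≤ q (z (n-1)) * T (z n) - q (z 0) * T (z 0) := by
      refine aux_abel (fun i => q (z i)) (fun i => T (z i)) n hn (fun i j hij hj => ?_)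
        (fun i hi => ?_)
      · exact hq_mono (hmemIoo i (by omega)) (hmemIoo j (by omega)) (hmono_z i j hij)
      · refine hT_nonneg _ ?_
        obtain ⟨a1, a2⟩ := hmem i hi
        exact ⟨by linarith, by linarith⟩
    have hTzn0 : 0 ≤ T (z n) := by
      rw [hzn]; exact hT_nonneg _ ⟨by linarith, by linarith⟩
    have hq_le : q (z (n-1)) ≤ max (q (1-δ)) 0 := by
      refine le_trans ?_ (le_max_left _ _)
      rw [← hzn]
      exact hq_mono (hmemIoo (n-1) (by omega)) (hmemIoo n le_rfl) (hmono_z (n-1) n (by omega))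
    have hterm1 : q (z (n-1)) * T (z n) ≤ max (q (1-δ)) 0 * T (1-δ) := by
      rw [hzn] at hTzn0 ⊢
      exact mul_le_mul_of_nonneg_right hq_le hTzn0
    have hterm2 : -(q (z 0) * T (z 0)) ≤ max (-q δ) 0 * T δ := by
      rw [hz0]
      have hTδ : 0 ≤ T δ := hT_nonneg _ ⟨hδ0.le, by linarith⟩
      have : -q δ ≤ max (-q δ) 0 := le_max_left _ _
      nlinarith
    have hΔtot : (q (z n) - q (z 0)) * C ≤ (q (1-δ) - q δ) * C := by
      rw [hzn, hz0]
    rw [htel] at hsum_le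
    linarith
  -- limit n → ∞
  have hC : Tendsto (fun n : ℕ => Real.sqrt ((1-2*δ)/n)) atTop (nhds 0) := by
    have h1 : Tendsto (fun n : ℕ => (1-2*δ)/n) atTop (nhds 0) :=
      tendsto_const_div_atTop_nhds_zero_nat _
    have h2 := (Real.continuous_sqrt.tendsto 0).comp h1
    rw [Real.sqrt_zero] at h2
    exact h2
  have hlim : Tendsto (fun n : ℕ => max (q (1-δ)) 0 * T (1-δ) + max (-q δ) 0 * T δ
      + (q (1-δ) - q δ) * (Real.sqrt ((1-2*δ)/n) * Real.sqrt Ytot)) atTop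
      (nhds (max (q (1-δ)) 0 * T (1-δ) + max (-q δ) 0 * T δ)) := by
    have h3 : Tendsto (fun n : ℕ => (q (1-δ) - q δ) * (Real.sqrt ((1-2*δ)/n) * Real.sqrt Ytot))
        atTop (nhds 0) := by
      have h4 : Tendsto (fun n : ℕ => Real.sqrt ((1-2*δ)/n) * Real.sqrt Ytot) atTop
          (nhds (0 * Real.sqrt Ytot)) := hC.mul (tendsto_const_nhds (x := Real.sqrt Ytot))
      have h5 := h4.const_mul (q (1-δ) - q δ)
      simpa using h5
    simpa using tendsto_const_nhds.add h3
  exact ge_of_tendsto hlim (eventually_atTop.2 ⟨1, key⟩)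

set_option maxHeartbeats 2000000 in
/-- If `q : (0,1) → ℝ` is square-integrable and nondecreasing, then for every nonnegative
function `T ∈ H¹(0,1)` (with derivative `T'`) satisfying `T 0 = T 1 = 0`,
one has `-∫₀¹ q z * T' z dz ≥ 0`. -/
theorem positivity_of_multiplier_functional
    (q T T' : ℝ → ℝ)
    (hq_sq : IntegrableOn (fun z => q z ^ 2) (Ioo (0:ℝ) 1))
    (hq_mono : MonotoneOn q (Ioo (0:ℝ) 1))
    (hT_deriv : ∀ z ∈ Icc (0:ℝ) 1, HasDerivAt T (T' z) z)
    (hT'_sq : IntegrableOn (fun z => T' z ^ 2) (Ioo (0:ℝ) 1))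
    (hT_nonneg : ∀ z ∈ Icc (0:ℝ) 1, 0 ≤ T z)
    (hT0 : T 0 = 0) (hT1 : T 1 = 0) :
    0 ≤ -∫ z in (0:ℝ)..1, q z * T' z := by
  refine neg_nonneg.2 ?_
  -- measurability and integrability
  have hqm : AEStronglyMeasurable q (volume.restrict (Ioo (0:ℝ) 1)) :=
    (aemeasurable_restrict_of_monotoneOn measurableSet_Ioo hq_mono).aestronglyMeasurable
  have hT'm : AEStronglyMeasurable T' (volume.restrict (Ioo (0:ℝ) 1)) := by
    have hd : ∀ᵐ z ∂(volume.restrict (Ioo (0:ℝ) 1)), deriv T z = T' z := by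
      filter_upwards [ae_restrict_mem measurableSet_Ioo] with z hz
      exact (hT_deriv z ⟨hz.1.le, hz.2.le⟩).deriv
    exact (measurable_deriv T).aestronglyMeasurable.congr hd
  have hT'int : IntegrableOn T' (Ioo (0:ℝ) 1) := aux_sq_int hT'm hT'_sq
  have habs : IntegrableOn (fun z => |T' z|) (Ioo (0:ℝ) 1) := hT'int.abs
  have hqT' : IntegrableOn (fun z => q z * T' z) (Ioo (0:ℝ) 1) := by
    have hg : IntegrableOn (fun z => (q z ^ 2 + T' z ^ 2)/2) (Ioo (0:ℝ) 1) :=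
      (hq_sq.add hT'_sq).div_const 2
    refine hg.mono' (hqm.mul hT'm) (Filter.Eventually.of_forall fun z => ?_)
    rw [Real.norm_eq_abs, abs_mul]
    nlinarith [sq_nonneg (|q z| - |T' z|), sq_abs (q z), sq_abs (T' z),
      abs_nonneg (q z), abs_nonneg (T' z)]
  have hptw : ∀ z : ℝ, q z * T' z ≤ (q z ^ 2 + T' z ^ 2) / 2 := by
    intro z; nlinarith [sq_nonneg (q z - T' z)]
  have hftc : ∀ a b : ℝ, 0 ≤ a → a ≤ b → b ≤ 1 → ∫ z in a..b, T' z = T b - T a := by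
    intro a b h0 hab hb1
    refine intervalIntegral.integral_eq_sub_of_hasDerivAt (fun z hz => hT_deriv z ?_)
      (aux_II hT'int h0 hab hb1)
    rw [uIcc_of_le hab] at hz
    exact ⟨le_trans h0 hz.1, le_trans hz.2 hb1⟩
  -- main estimate for each k
  have hmain : ∀ k : ℕ, (∫ z in (0:ℝ)..1, q z * T' z) ≤
      (∫ z in Ioo (0:ℝ) (1/((k:ℝ)+3)), (q z ^ 2 + T' z ^ 2))
        + ∫ z in Ioo (1 - 1/((k:ℝ)+3)) 1, (q z ^ 2 + T' z ^ 2) := by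
    intro k
    set δ : ℝ := 1/((k:ℝ)+3) with hδdef
    have hk3 : (3:ℝ) ≤ (k:ℝ) + 3 := by
      have : (0:ℝ) ≤ (k:ℝ) := Nat.cast_nonneg k
      linarith
    have hδ0 : 0 < δ := by positivity
    have hδh : δ < 1/2 := by
      have : δ ≤ 1/3 := by
        rw [hδdef]
        exact one_div_le_one_div_of_le (by norm_num) hk3
      linarith
    clear_value δ
    have hsubL : Ioo (0:ℝ) δ ⊆ Ioo (0:ℝ) 1 := Ioo_subset_Ioo le_rfl (by linarith)
    have hsubR : Ioo (1-δ) 1 ⊆ Ioo (0:ℝ) 1 := Ioo_subset_Ioo (by linarith) le_rfl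
    set Xl := ∫ z in Ioo (0:ℝ) δ, q z ^ 2 with hXl
    set Yl := ∫ z in Ioo (0:ℝ) δ, T' z ^ 2 with hYl
    set Xr := ∫ z in Ioo (1-δ) 1, q z ^ 2 with hXr
    set Yr := ∫ z in Ioo (1-δ) 1, T' z ^ 2 with hYr
    have hXl0 : 0 ≤ Xl := setIntegral_nonneg measurableSet_Ioo (fun z _ => sq_nonneg _)
    have hYl0 : 0 ≤ Yl := setIntegral_nonneg measurableSet_Ioo (fun z _ => sq_nonneg _)
    have hXr0 : 0 ≤ Xr := setIntegral_nonneg measurableSet_Ioo (fun z _ => sq_nonneg _)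
    have hYr0 : 0 ≤ Yr := setIntegral_nonneg measurableSet_Ioo (fun z _ => sq_nonneg _)
    have hSl : ∫ z in Ioo (0:ℝ) δ, (q z ^ 2 + T' z ^ 2) = Xl + Yl :=
      integral_add (hq_sq.mono_set hsubL) (hT'_sq.mono_set hsubL)
    have hSr : ∫ z in Ioo (1-δ) 1, (q z ^ 2 + T' z ^ 2) = Xr + Yr :=
      integral_add (hq_sq.mono_set hsubR) (hT'_sq.mono_set hsubR)
    have hsum_half : IntegrableOn (fun z => (q z ^ 2 + T' z ^ 2)/2) (Ioo (0:ℝ) 1) :=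
      (hq_sq.add hT'_sq).div_const 2
    clear_value Xl Yl Xr Yr
    -- split the integral
    have e1 : (∫ z in (0:ℝ)..δ, q z * T' z) + (∫ z in δ..(1-δ), q z * T' z)
        = ∫ z in (0:ℝ)..(1-δ), q z * T' z :=
      integral_add_adjacent_intervals (aux_II hqT' le_rfl hδ0.le (by linarith))
        (aux_II hqT' hδ0.le (by linarith) (by linarith))
    have e2 : (∫ z in (0:ℝ)..(1-δ), q z * T' z) + (∫ z in (1-δ)..1, q z * T' z)
        = ∫ z in (0:ℝ)..1, q z * T' z :=
      integral_add_adjacent_intervals (aux_II hqT' le_rfl (by linarith) (by linarith))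
        (aux_II hqT' (by linarith) (by linarith) le_rfl)
    -- tail bounds
    have t1 : ∫ z in (0:ℝ)..δ, q z * T' z ≤ (Xl + Yl)/2 := by
      rw [intervalIntegral.integral_of_le hδ0.le, integral_Ioc_eq_integral_Ioo]
      have h1 : ∫ z in Ioo (0:ℝ) δ, q z * T' z
          ≤ ∫ z in Ioo (0:ℝ) δ, (q z ^ 2 + T' z ^ 2)/2 :=
        setIntegral_mono (hqT'.mono_set hsubL) (hsum_half.mono_set hsubL) hptw
      rw [MeasureTheory.integral_div, hSl] at h1
      exact h1
    have t3 : ∫ z in (1-δ)..1, q z * T' z ≤ (Xr + Yr)/2 := by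
      rw [intervalIntegral.integral_of_le (by linarith), integral_Ioc_eq_integral_Ioo]
      have h1 : ∫ z in Ioo (1-δ) 1, q z * T' z
          ≤ ∫ z in Ioo (1-δ) 1, (q z ^ 2 + T' z ^ 2)/2 :=
        setIntegral_mono (hqT'.mono_set hsubR) (hsum_half.mono_set hsubR) hptw
      rw [MeasureTheory.integral_div, hSr] at h1
      exact h1
    -- middle bound
    have t2 := aux_middle q T T' hq_mono hqT' habs hT'_sq hT'int hftc hT_nonneg hδ0 hδh
    -- bound A := max (q (1-δ)) 0 * T (1-δ)
    have hδIoo : δ ∈ Ioo (0:ℝ) 1 := ⟨hδ0, by linarith⟩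
    have h1δIoo : (1-δ) ∈ Ioo (0:ℝ) 1 := ⟨by linarith, by linarith⟩
    have hsqrtδ : (0:ℝ) < Real.sqrt δ := Real.sqrt_pos.2 hδ0
    have hA : max (q (1-δ)) 0 * T (1-δ) ≤ (Xr + Yr)/2 := by
      have hTb0 : 0 ≤ T (1-δ) := hT_nonneg _ ⟨by linarith, by linarith⟩
      have hb : T (1-δ) ≤ Real.sqrt δ * Real.sqrt Yr := by
        have h1 : T (1-δ) = -∫ z in (1-δ)..1, T' z := by
          rw [hftc (1-δ) 1 (by linarith) (by linarith) le_rfl, hT1]; ring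
        have h2 : -∫ z in (1-δ)..1, T' z ≤ ∫ z in (1-δ)..1, |T' z| := by
          have := intervalIntegral.abs_integral_le_integral_abs (f := T') (μ := volume)
            (a := 1-δ) (b := 1) (by linarith)
          have h3 := neg_le_abs (∫ z in (1-δ)..1, T' z)
          linarith
        have h4 := aux_cs (f := T') (by linarith : (1:ℝ)-δ ≤ 1)
          (aux_II habs (by linarith) (by linarith) le_rfl)
          (aux_II hT'_sq (by linarith) (by linarith) le_rfl)
        have h5 : ∫ z in (1-δ)..1, T' z ^ 2 = Yr := by
          rw [intervalIntegral.integral_of_le (by linarith), integral_Ioc_eq_integral_Ioo]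
          exact hYr.symm
        have h6 : (1:ℝ) - (1-δ) = δ := by ring
        rw [h5, h6] at h4
        linarith
      have ha : max (q (1-δ)) 0 ≤ Real.sqrt Xr / Real.sqrt δ := by
        rcases le_or_gt (q (1-δ)) 0 with hc | hc
        · rw [max_eq_right hc]; positivity
        · rw [max_eq_left hc.le]
          have hlow : q (1-δ) ^ 2 * δ ≤ Xr := by
            have hvol : (volume (Ioo (1-δ) 1)).toReal = δ := by
              rw [Real.volume_Ioo, ENNReal.toReal_ofReal (by linarith)]; ring
            have hmono : ∫ z in Ioo (1-δ) 1, q (1-δ) ^ 2 ≤ Xr := by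
              rw [hXr]
              refine setIntegral_mono_on (integrableOn_const ?_)
                (hq_sq.mono_set hsubR) measurableSet_Ioo (fun z hz => ?_)
              · rw [Real.volume_Ioo]; exact ENNReal.ofReal_ne_top
              · have hzi : z ∈ Ioo (0:ℝ) 1 := hsubR hz
                have := hq_mono h1δIoo hzi hz.1.le
                nlinarith
            rw [setIntegral_const, measureReal_def, hvol, smul_eq_mul] at hmono
            linarith
          have : q (1-δ) ≤ Real.sqrt (Xr/δ) := by
            rw [Real.le_sqrt hc.le (by positivity)]
            rw [le_div_iff₀ hδ0]
            exact hlow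
          rwa [Real.sqrt_div hXr0 δ] at this
      calc max (q (1-δ)) 0 * T (1-δ)
          ≤ (Real.sqrt Xr / Real.sqrt δ) * (Real.sqrt δ * Real.sqrt Yr) :=
            mul_le_mul ha hb hTb0 (by positivity)
        _ = Real.sqrt Xr * Real.sqrt Yr := by field_simp
        _ ≤ (Xr + Yr)/2 := by
            nlinarith [sq_nonneg (Real.sqrt Xr - Real.sqrt Yr),
              Real.sq_sqrt hXr0, Real.sq_sqrt hYr0]
    -- bound B := max (-q δ) 0 * T δ
    have hB : max (-q δ) 0 * T δ ≤ (Xl + Yl)/2 := by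
      have hTb0 : 0 ≤ T δ := hT_nonneg _ ⟨hδ0.le, by linarith⟩
      have hb : T δ ≤ Real.sqrt δ * Real.sqrt Yl := by
        have h1 : T δ = ∫ z in (0:ℝ)..δ, T' z := by
          rw [hftc 0 δ le_rfl hδ0.le (by linarith), hT0]; ring
        have h2 : ∫ z in (0:ℝ)..δ, T' z ≤ ∫ z in (0:ℝ)..δ, |T' z| := by
          have := intervalIntegral.abs_integral_le_integral_abs (f := T') (μ := volume)
            (a := 0) (b := δ) hδ0.le
          have h3 := le_abs_self (∫ z in (0:ℝ)..δ, T' z)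
          linarith
        have h4 := aux_cs (f := T') hδ0.le
          (aux_II habs le_rfl hδ0.le (by linarith))
          (aux_II hT'_sq le_rfl hδ0.le (by linarith))
        have h5 : ∫ z in (0:ℝ)..δ, T' z ^ 2 = Yl := by
          rw [intervalIntegral.integral_of_le hδ0.le, integral_Ioc_eq_integral_Ioo]
          exact hYl.symm
        have h6 : δ - (0:ℝ) = δ := by ring
        rw [h5, h6] at h4
        linarith
      have ha : max (-q δ) 0 ≤ Real.sqrt Xl / Real.sqrt δ := by
        rcases le_or_gt 0 (q δ) with hc | hc
        · rw [max_eq_right (by linarith)]; positivity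
        · rw [max_eq_left (by linarith)]
          have hlow : (-q δ) ^ 2 * δ ≤ Xl := by
            have hvol : (volume (Ioo (0:ℝ) δ)).toReal = δ := by
              rw [Real.volume_Ioo, ENNReal.toReal_ofReal (by linarith)]; ring
            have hmono : ∫ z in Ioo (0:ℝ) δ, (-q δ) ^ 2 ≤ Xl := by
              rw [hXl]
              refine setIntegral_mono_on (integrableOn_const ?_)
                (hq_sq.mono_set hsubL) measurableSet_Ioo (fun z hz => ?_)
              · rw [Real.volume_Ioo]; exact ENNReal.ofReal_ne_top
              · have hzi : z ∈ Ioo (0:ℝ) 1 := hsubL hz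
                have := hq_mono hzi hδIoo hz.2.le
                nlinarith
            rw [setIntegral_const, measureReal_def, hvol, smul_eq_mul] at hmono
            linarith
          have : -q δ ≤ Real.sqrt (Xl/δ) := by
            rw [Real.le_sqrt (by linarith) (by positivity)]
            rw [le_div_iff₀ hδ0]
            exact hlow
          rwa [Real.sqrt_div hXl0 δ] at this
      calc max (-q δ) 0 * T δ
          ≤ (Real.sqrt Xl / Real.sqrt δ) * (Real.sqrt δ * Real.sqrt Yl) :=
            mul_le_mul ha hb hTb0 (by positivity)
        _ = Real.sqrt Xl * Real.sqrt Yl := by field_simp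
        _ ≤ (Xl + Yl)/2 := by
            nlinarith [sq_nonneg (Real.sqrt Xl - Real.sqrt Yl),
              Real.sq_sqrt hXl0, Real.sq_sqrt hYl0]
    rw [hSl, hSr]
    linarith
  -- limits of the tails
  have ht0 : Tendsto (fun k : ℕ => 1/((k:ℝ)+3)) atTop (nhds 0) := by
    have h1 := (tendsto_const_div_atTop_nhds_zero_nat (1:ℝ)).comp (tendsto_add_atTop_nat 3)
    have h2 : (fun k : ℕ => (1:ℝ)/((k:ℝ)+3)) = (fun n : ℕ => (1:ℝ)/(n:ℝ)) ∘ (fun a => a + 3) := by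
      funext k; simp [Function.comp]
    rw [h2]
    exact h1
  have hsum_int : IntegrableOn (fun z => q z ^ 2 + T' z ^ 2) (Ioo (0:ℝ) 1) := hq_sq.add hT'_sq
  have hsum_pos : ∀ z, 0 ≤ q z ^ 2 + T' z ^ 2 := fun z => by positivity
  have hδle1 : ∀ k : ℕ, 1/((k:ℝ)+3) ≤ 1 := by
    intro k
    have : (1:ℝ) ≤ (k:ℝ) + 3 := by have := Nat.cast_nonneg (α := ℝ) k; linarith
    rw [div_le_one (by linarith)]; exact this
  have hL : Tendsto (fun k : ℕ => ∫ z in Ioo (0:ℝ) (1/((k:ℝ)+3)), (q z ^ 2 + T' z ^ 2))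
      atTop (nhds 0) := by
    refine aux_tail hsum_int hsum_pos _ (fun k => measurableSet_Ioo)
      (fun k => Ioo_subset_Ioo le_rfl (hδle1 k)) (fun z hz => ?_)
    filter_upwards [ht0.eventually_lt_const hz.1] with k hk
    intro hmem
    exact absurd hmem.2 (not_lt.2 hk.le)
  have hR : Tendsto (fun k : ℕ => ∫ z in Ioo (1 - 1/((k:ℝ)+3)) 1, (q z ^ 2 + T' z ^ 2))
      atTop (nhds 0) := by
    refine aux_tail hsum_int hsum_pos _ (fun k => measurableSet_Ioo)
      (fun k => Ioo_subset_Ioo (by linarith [hδle1 k]) le_rfl) (fun z hz => ?_)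
    have h1z : (0:ℝ) < 1 - z := by linarith [hz.2]
    filter_upwards [ht0.eventually_lt_const h1z] with k hk
    intro hmem
    have : 1 - 1/((k:ℝ)+3) < z := hmem.1
    linarith
  have hfin := hL.add hR
  rw [add_zero] at hfin
  exact ge_of_tendsto hfin (Filter.Eventually.of_forall hmain)
end

section
/- For all a, b, R > 0, the function F(a,b) = b/48 + (a+1)³√R/(64 b √(2ab)) satisfies F(a,b) ≥ 2^{-21/5} R^{1/5}, with equality at a = 1/5 and b = (9/5)(R/2)^{1/5}. -/
/-!
`F` is homogeneous: replacing `R` by `c⁵R` and `b` by `cb` multiplies it by `c`. With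
`u = (R/2)^{1/5}` this reduces everything to `R = 2`, where `2^{-21/5} R^{1/5} = u/16` becomes
`1/16`. Writing `a = r²/5`, `b = 9s²/5` turns `F(2, a, b) ≥ 1/16` into the polynomial inequality
`324 r s⁵ + (r² + 5)³ ≥ 540 r s³`, which is the sum of `216 r ≤ (r² + 5)³` and
`r`-times `5 s³ ≤ 3 s⁵ + 2`, both with a double root at `1`.
-/

open Real

noncomputable def fluxBound (R a b : ℝ) : ℝ :=
  b / 48 + (a + 1) ^ 3 * √R / (64 * b * √(2 * a * b))

lemma fluxBound_scale {c : ℝ} (hc : 0 < c) (R a b : ℝ) :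
    fluxBound (c ^ 5 * R) a (c * b) = c * fluxBound R a b := by
  have hR : √(c ^ 5 * R) = c ^ 2 * √c * √R := by
    rw [show c ^ 5 * R = (c ^ 2) ^ 2 * c * R by ring, sqrt_mul (by positivity),
      sqrt_mul (sq_nonneg _), sqrt_sq (sq_nonneg _)]
  have hab : √(2 * a * (c * b)) = √c * √(2 * a * b) := by
    rw [show 2 * a * (c * b) = c * (2 * a * b) by ring, sqrt_mul hc.le]
  unfold fluxBound
  rw [hR, hab]
  rcases eq_or_ne b 0 with rfl | hb
  · simp
  rcases eq_or_ne (√(2 * a * b)) 0 with h | h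
  · simp [h]; ring
  field_simp

lemma fluxBound_two_ge {a b : ℝ} (ha : 0 < a) (hb : 0 < b) : 1 / 16 ≤ fluxBound 2 a b := by
  obtain ⟨r, hr, rfl⟩ : ∃ r, 0 < r ∧ a = r ^ 2 / 5 :=
    ⟨√(5 * a), by positivity, by rw [sq_sqrt (by positivity)]; ring⟩
  obtain ⟨s, hs, rfl⟩ : ∃ s, 0 < s ∧ b = 9 * s ^ 2 / 5 :=
    ⟨√(5 * b / 9), by positivity, by rw [sq_sqrt (by positivity)]; ring⟩
  have h2 : 0 < √2 := by positivity
  have hsq : √(2 * (r ^ 2 / 5) * (9 * s ^ 2 / 5)) = 3 * r * s / 5 * √2 := by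
    rw [show 2 * (r ^ 2 / 5) * (9 * s ^ 2 / 5) = (3 * r * s / 5) ^ 2 * 2 by ring,
      sqrt_mul (sq_nonneg _), sqrt_sq (by positivity)]
  have hpr : 216 * r ≤ (r ^ 2 + 5) ^ 3 := by
    nlinarith [mul_nonneg (sq_nonneg (r - 1))
      (by positivity : 0 ≤ r ^ 4 + 2 * r ^ 3 + 18 * r ^ 2 + 34 * r + 125)]
  have hps : 5 * s ^ 3 ≤ 3 * s ^ 5 + 2 := by
    nlinarith [mul_nonneg (sq_nonneg (s - 1))
      (by positivity : 0 ≤ 3 * s ^ 3 + 6 * s ^ 2 + 4 * s + 2)]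
  unfold fluxBound
  rw [hsq, div_add_div _ _ (by norm_num) (by positivity), le_div_iff₀ (by positivity)]
  nlinarith [mul_le_mul_of_nonneg_left hps hr.le, hpr]

lemma fluxBound_two_optimum : fluxBound 2 (1 / 5) (9 / 5) = 1 / 16 := by
  have hsq : √(2 * (1 / 5) * (9 / 5) : ℝ) = 3 / 5 * √2 := by
    rw [show (2 * (1 / 5) * (9 / 5) : ℝ) = (3 / 5) ^ 2 * 2 by norm_num,
      sqrt_mul (sq_nonneg _), sqrt_sq (by norm_num)]
  unfold fluxBound
  rw [hsq]
  field_simp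
  norm_num

lemma two_rpow_mul_rpow_one_fifth (R : ℝ) (hR : 0 ≤ R) :
    (2:ℝ) ^ (-(21:ℝ)/5) * R ^ ((1:ℝ)/5) = (R / 2) ^ ((1:ℝ)/5) / 16 := by
  rw [div_rpow hR zero_le_two, show -(21:ℝ)/5 = -4 + -(1/5) by norm_num,
    rpow_add two_pos, rpow_neg zero_le_two, rpow_neg zero_le_two]
  norm_num
  ring

/-- Optimization step for the explicit analytic bound: for all `a, b, R > 0`,
`F(a,b) = b/48 + (a+1)³√R/(64 b √(2ab)) ≥ 2^{-21/5} R^{1/5}`, with equality at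
`a = 1/5`, `b = (9/5)(R/2)^{1/5}`. -/
theorem analytic_bound_optimization (R : ℝ) (hR : 0 < R) :
    (∀ a b : ℝ, 0 < a → 0 < b →
      (2:ℝ) ^ (-(21:ℝ)/5) * R ^ ((1:ℝ)/5) ≤
        b / 48 + (a + 1) ^ 3 * Real.sqrt R / (64 * b * Real.sqrt (2 * a * b))) ∧
    ((1/5 : ℝ) + 1) ^ 3 * Real.sqrt R /
        (64 * ((9/5) * (R/2) ^ ((1:ℝ)/5)) *
          Real.sqrt (2 * (1/5) * ((9/5) * (R/2) ^ ((1:ℝ)/5)))) +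
      ((9/5) * (R/2) ^ ((1:ℝ)/5)) / 48
        = (2:ℝ) ^ (-(21:ℝ)/5) * R ^ ((1:ℝ)/5) := by
  set u := (R / 2) ^ ((1:ℝ) / 5) with hu_def
  have hu : 0 < u := by positivity
  have hRu : R = u ^ 5 * 2 := by
    rw [hu_def, ← rpow_natCast, ← rpow_mul (by positivity)]; norm_num
  rw [two_rpow_mul_rpow_one_fifth R hR.le]
  refine ⟨fun a b ha hb => ?_, ?_⟩
  · calc u / 16 = u * (1 / 16) := by ring
      _ ≤ u * fluxBound 2 a (b / u) := by gcongr; exact fluxBound_two_ge ha (by positivity)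
      _ = fluxBound R a b := by rw [← fluxBound_scale hu, mul_div_cancel₀ _ hu.ne', ← hRu]
  · calc _ = fluxBound R (1 / 5) (u * (9 / 5)) := by rw [fluxBound, add_comm, mul_comm u]
      _ = u / 16 := by rw [hRu, fluxBound_scale hu, fluxBound_two_optimum]; ring
end

section
/- Let a, b > 0 with a ≤ b, R ≥ 1, 0 < δ < 1, and let ψ ∈ C¹[0,1] satisfy ψ(1) = 0, ψ' ≤ 0 on [0,δ], ψ' ≥ 0 on [δ, 1−ε], ‖ψ'‖_{L^∞(1−ε,1)} ≤ 2b for some 0 < ε < 1−δ, and the spectral estimate δ²‖a−ψ'‖_{L^∞(0,δ)} + ε²‖a−ψ'‖_{L^∞(1−ε,1)} ≤ 8√(2ab/R). Then sup_{z ∈ [δ,1]} ψ(z) ≤ 4 b R^{−1/4}. -/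
open Set

set_option maxHeartbeats 1000000 in
/-- First part of the proof of Proposition 5.1: under the boundary-layer structural
assumptions on `ψ` and the spectral-constraint estimate, `ψ` is bounded above by
`4 b R^{-1/4}` on `[δ, 1]`. Here `M₀` and `M₁` are (essential) bounds for `|a − ψ'|`
on `[0,δ]` and `[1−ε,1]` respectively. -/
theorem psi_small_away_from_origin
    (a b R δ ε : ℝ)
    (ha : 0 < a) (hab : a ≤ b) (hR : 1 ≤ R)
    (hδ0 : 0 < δ) (hδ1 : δ < 1)
    (hε0 : 0 < ε) (hεδ : ε < 1 - δ)
    (ψ ψ' : ℝ → ℝ)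
    (hψ_deriv : ∀ z ∈ Icc (0:ℝ) 1, HasDerivAt ψ (ψ' z) z)
    (hψ'_cont : ContinuousOn ψ' (Icc (0:ℝ) 1))
    (hψ1 : ψ 1 = 0)
    (hψ'_lower : ∀ z ∈ Icc (0:ℝ) δ, ψ' z ≤ 0)
    (hψ'_bulk : ∀ z ∈ Icc δ (1 - ε), 0 ≤ ψ' z)
    (hψ'_top : ∀ z ∈ Icc (1 - ε) 1, |ψ' z| ≤ 2 * b)
    (M₀ M₁ : ℝ)
    (hM₀ : ∀ z ∈ Icc (0:ℝ) δ, |a - ψ' z| ≤ M₀)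
    (hM₁ : ∀ z ∈ Icc (1 - ε) 1, |a - ψ' z| ≤ M₁)
    (hspec : δ ^ 2 * M₀ + ε ^ 2 * M₁ ≤ 8 * Real.sqrt (2 * a * b / R)) :
    ∀ z ∈ Icc δ 1, ψ z ≤ 4 * b * R ^ (-(1:ℝ)/4) := by
  intro z hz
  have hb : 0 < b := lt_of_lt_of_le ha hab
  have hR0 : 0 < R := lt_of_lt_of_le one_pos hR
  have hRpow : 0 < R ^ (-(1:ℝ)/4) := Real.rpow_pos_of_pos hR0 _
  have hCpos : 0 < 4 * b * R ^ (-(1:ℝ)/4) := by positivity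
  rcases eq_or_lt_of_le hz.2 with h1 | h1
  · rw [h1, hψ1]; exact hCpos.le
  -- set K
  rcases le_or_gt (ψ z) 0 with hK | hK
  · exact hK.trans hCpos.le
  obtain ⟨w, hw⟩ : ∃ w, w = max z (1 - ε) := ⟨_, rfl⟩
  have hεlt1 : 1 - ε < 1 := by linarith
  have hw1 : w < 1 := hw ▸ max_lt h1 hεlt1
  have hwε : 1 - ε ≤ w := hw ▸ le_max_right _ _
  have hw0 : 0 ≤ w := le_trans (by linarith) hwε
  -- ψ z ≤ ψ w
  have hψzw : ψ z ≤ ψ w := by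
    rcases le_or_gt (1 - ε) z with hle | hlt
    · have : w = z := by rw [hw]; exact max_eq_left hle
      rw [this]
    · have hwval : max z (1 - ε) = 1 - ε := max_eq_right hlt.le
      have hmono : MonotoneOn ψ (Icc δ (1 - ε)) := by
        apply monotoneOn_of_deriv_nonneg (convex_Icc _ _)
        · intro x hx
          exact (hψ_deriv x ⟨le_trans hδ0.le hx.1, by linarith [hx.2]⟩).continuousAt.continuousWithinAt
        · intro x hx
          rw [interior_Icc] at hx
          exact (hψ_deriv x ⟨by linarith [hx.1], by linarith [hx.2]⟩).differentiableAt.differentiableWithinAt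
        · intro x hx
          rw [interior_Icc] at hx
          rw [(hψ_deriv x ⟨by linarith [hx.1], by linarith [hx.2]⟩).deriv]
          exact hψ'_bulk x ⟨hx.1.le, hx.2.le⟩
      rw [hw, hwval]
      exact hmono ⟨hz.1, hlt.le⟩ ⟨by linarith, le_refl _⟩ hlt.le
  obtain ⟨t, ht⟩ : ∃ t, t = 1 - w := ⟨_, rfl⟩
  have ht0 : 0 < t := by rw [ht]; linarith
  have htε : t ≤ ε := by rw [ht]; linarith
  -- MVT bounds on [w,1]
  have hsub : Icc w 1 ⊆ Icc (1 - ε) 1 := Icc_subset_Icc hwε le_rfl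
  have hsub01 : Icc w 1 ⊆ Icc (0:ℝ) 1 := Icc_subset_Icc hw0 le_rfl
  have hw1mem : w ∈ Icc w 1 := ⟨le_rfl, hw1.le⟩
  have h1mem : (1:ℝ) ∈ Icc w 1 := ⟨hw1.le, le_rfl⟩
  -- bound (i): ψ w ≤ 2 b t
  have hbound1 : ψ w ≤ 2 * b * t := by
    have := Convex.norm_image_sub_le_of_norm_hasDerivWithin_le
      (f := ψ) (f' := ψ') (s := Icc w 1)
      (fun x hx => (hψ_deriv x (hsub01 hx)).hasDerivWithinAt)
      (fun x hx => by simpa using hψ'_top x (hsub hx)) (convex_Icc _ _) h1mem hw1mem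
    rw [hψ1] at this
    have h2 : |ψ w - 0| ≤ 2 * b * |w - 1| := by simpa using this
    have h3 : |w - 1| = t := by rw [abs_sub_comm]; rw [abs_of_nonneg (by linarith)]; linarith
    rw [h3, sub_zero] at h2
    exact (abs_le.mp h2).2
  -- bound (ii): ψ w + a * t ≤ M₁ * t
  have hbound2 : ψ w + a * t ≤ M₁ * t := by
    have := Convex.norm_image_sub_le_of_norm_hasDerivWithin_le
      (f := fun x => ψ x - a * x) (f' := fun x => ψ' x - a) (s := Icc w 1)
      (fun x hx => by
        have h := ((hψ_deriv x (hsub01 hx)).sub ((hasDerivAt_id x).const_mul a)).hasDerivWithinAt (s := Icc w 1); simp only [mul_one] at h; exact h)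
      (fun x hx => by
        have := hM₁ x (hsub hx)
        rw [Real.norm_eq_abs, abs_sub_comm]
        simpa using this)
      (convex_Icc _ _) h1mem hw1mem
    have h3 : |w - 1| = t := by rw [abs_sub_comm, abs_of_nonneg (by linarith)]; linarith
    simp only [Real.norm_eq_abs] at this
    rw [h3, hψ1] at this
    have h4 := (abs_le.mp this).2
    have h5 : t = 1 - w := ht
    nlinarith [h4]
  have hM₁0 : 0 ≤ M₁ := le_trans (abs_nonneg _) (hM₁ 1 ⟨hεlt1.le, le_rfl⟩)
  have hM₀0 : 0 ≤ M₀ := le_trans (abs_nonneg _) (hM₀ 0 ⟨le_rfl, hδ0.le⟩)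
  -- core inequality : a t² + t K ≤ 8 √(2ab/R)
  obtain ⟨K, hKdef⟩ : ∃ K, K = ψ z := ⟨_, rfl⟩
  rw [← hKdef] at hK hψzw ⊢
  have hcore : a * t ^ 2 + t * K ≤ 8 * Real.sqrt (2 * a * b / R) := by
    have h1 : t * (K + a * t) ≤ t * (M₁ * t) := by
      apply mul_le_mul_of_nonneg_left _ ht0.le
      calc K + a * t ≤ ψ w + a * t := by linarith
        _ ≤ M₁ * t := hbound2
    have h2 : t * (M₁ * t) ≤ ε ^ 2 * M₁ := by
      nlinarith [mul_le_mul htε htε ht0.le hε0.le, mul_le_mul_of_nonneg_left (mul_le_mul htε htε ht0.le hε0.le) hM₁0]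
    have h6 : t * (K + a * t) = a * t ^ 2 + t * K := by ring
    have h7 : 0 ≤ δ ^ 2 * M₀ := mul_nonneg (sq_nonneg δ) hM₀0
    linarith
  have hX : (0:ℝ) ≤ 2 * a * b / R := by positivity
  have hsq : (a * t ^ 2 + t * K) ^ 2 ≤ 64 * (2 * a * b / R) := by
    have hnn : 0 ≤ a * t ^ 2 + t * K :=
      add_nonneg (by positivity) (mul_nonneg ht0.le hK.le)
    have h8 : (8 * Real.sqrt (2 * a * b / R)) ^ 2 = 64 * (2 * a * b / R) := by
      rw [mul_pow, Real.sq_sqrt hX]; ring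
    calc (a * t ^ 2 + t * K) ^ 2 ≤ (8 * Real.sqrt (2 * a * b / R)) ^ 2 :=
          pow_le_pow_left₀ hnn hcore 2
      _ = 64 * (2 * a * b / R) := h8
  have hsq' : (a * t ^ 2 + t * K) ^ 2 * R ≤ 128 * a * b := by
    calc (a * t ^ 2 + t * K) ^ 2 * R ≤ 64 * (2 * a * b / R) * R :=
          mul_le_mul_of_nonneg_right hsq hR0.le
      _ = 128 * a * b := by field_simp; ring
  -- t³ K R ≤ 32 b
  have ht3K : t ^ 3 * K * R ≤ 32 * b := by
    have key : 4 * a * (t ^ 3 * K * R) ≤ 4 * a * (32 * b) := by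
      nlinarith [hsq', mul_nonneg (sq_nonneg (a * t ^ 2 - t * K)) hR0.le]
    exact le_of_mul_le_mul_left key (by positivity)
  have hK4 : K ^ 4 ≤ 256 * b ^ 4 / R := by
    have hKt : K ≤ 2 * b * t := le_trans hψzw hbound1
    have h3 : K ^ 3 ≤ (2 * b * t) ^ 3 := pow_le_pow_left₀ hK.le hKt 3
    have s1 : K ^ 3 * (K * R) ≤ (2 * b * t) ^ 3 * (K * R) :=
      mul_le_mul_of_nonneg_right h3 (mul_nonneg hK.le hR0.le)
    have s2 : 8 * b ^ 3 * (t ^ 3 * K * R) ≤ 8 * b ^ 3 * (32 * b) :=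
      mul_le_mul_of_nonneg_left ht3K (by positivity)
    rw [le_div_iff₀ hR0]
    nlinarith [s1, s2]
  -- conclude
  have hC4 : (4 * b * R ^ (-(1:ℝ)/4)) ^ 4 = 256 * b ^ 4 / R := by
    have : (R ^ (-(1:ℝ)/4)) ^ (4:ℕ) = R⁻¹ := by
      rw [← Real.rpow_natCast (R ^ (-(1:ℝ)/4)) 4, ← Real.rpow_mul hR0.le]
      norm_num
      exact Real.rpow_neg_one R
    rw [mul_pow, mul_pow, this]
    ring
  have hfinal : K ^ 4 ≤ (4 * b * R ^ (-(1:ℝ)/4)) ^ 4 := by rw [hC4]; exact hK4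
  exact le_of_pow_le_pow_left₀ (by norm_num) hCpos.le hfinal
end
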